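/- Shift regularity of the penalized subsolution (Lemma 6.10): Let λ > 0, Ĉ > 0 and let W₁ : 𝒞₀ → ℝ satisfy |W₁(x) - W₁(x_h)| ≤ Ĉ(1+|x|_C)(h + h^{1/2} + 1 - e^{-λh}) for all h ≥ 0 and x ∈ 𝒞₀. Let ε > 0, β > 0, t̂ ≥ 0, x̂, ξ̂ ∈ 𝒞₀, and let (t_i, x^i)_{i≥0} ⊆ [0,∞) × 𝒞₀ satisfy 0 ≤ t_i ≤ t̂ for all i and sup_i |x^i|_C < ∞ (so the series below converges). Define, for (t,x) ∈ Λ^{t̂}, w₁(t,x) := W₁(x) - 2⁵β·Υ(t,x,t̂,ξ̂) - ε·Υ^{1,3}(x) - ε·Ῡ(t̂,x̂,t,x) - Σ_{i=0}^∞ 2^{-i}·Ῡ(t_i,x^i,t,x). Then for every T > t̂, all t̂ ≤ t ≤ s ≤ T and all x ∈ 𝒞₀: w₁(t,x) - w₁(s, x_{s-t}) ≤ Ĉ(1+|x|_C)((s-t) + (s-t)^{1/2} + 1 - e^{-λ(s-t)}) + (2ε+4)T(s-t). -/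

import Mathlib

open Filter Topology MeasureTheory Matrix
open scoped RealInnerProductSpace

noncomputable section

namespace PathHJB

/-- The domain `(-∞,0]` of the paths. -/
abbrev PathDom : Type := Set.Iic (0 : ℝ)

abbrev Eucl (d : ℕ) := EuclideanSpace ℝ (Fin d)

/-- Paths on `(-∞,0]` with values in `ℝ^d`. -/
abbrev Pth (d : ℕ) := PathDom → Eucl d

def zeroPt : PathDom := ⟨0, Set.mem_Iic.mpr le_rfl⟩

/-- The sup norm `|x|_C`. -/
def normC {d : ℕ} (x : Pth d) : ℝ := ⨆ θ : PathDom, ‖x θ‖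

/-- The shifted path `x_h`. -/
def shift {d : ℕ} (x : Pth d) (h : ℝ) : Pth d := fun θ =>
  if hθ : -h ≤ θ.1 then x zeroPt
  else x ⟨θ.1 + h, Set.mem_Iic.mpr (by push_neg at hθ; linarith)⟩

/-- The vertical perturbation `x + v · 1_{{0}}`. -/
def vpert {d : ℕ} (x : Pth d) (v : Eucl d) : Pth d := fun θ =>
  if θ.1 = 0 then x θ + v else x θ

/-- Càdlàg: right-continuous with left limits. -/
def IsCadlag {d : ℕ} (x : Pth d) : Prop :=
  (∀ θ : PathDom, ContinuousWithinAt x {η : PathDom | θ.1 ≤ η.1} θ) ∧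
  (∀ θ : PathDom, ∃ L : Eucl d, Tendsto x (nhdsWithin θ {η : PathDom | η.1 < θ.1}) (nhds L))

/-- `𝒟₀`: càdlàg paths vanishing at `-∞`. -/
def D0 (d : ℕ) : Set (Pth d) := {x | IsCadlag x ∧ Tendsto x atBot (nhds 0)}

/-- `𝒞₀`: continuous paths vanishing at `-∞`. -/
def C0 (d : ℕ) : Set (Pth d) := {x | Continuous x ∧ Tendsto x atBot (nhds 0)}

/-- The metric `d_∞`. -/
def dInfty {d : ℕ} (p q : ℝ × Pth d) : ℝ :=
  if p.1 ≤ q.1 then |q.1 - p.1| + normC (shift p.2 (q.1 - p.1) - q.2)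
  else |p.1 - q.1| + normC (shift q.2 (p.1 - q.1) - p.2)

/-- `Λ̂^t = [t,∞) × 𝒟₀`. -/
def LamHat (d : ℕ) (t : ℝ) : Set (ℝ × Pth d) := {p | t ≤ p.1 ∧ p.2 ∈ D0 d}

/-- `Λ^t = [t,∞) × 𝒞₀`. -/
def Lam (d : ℕ) (t : ℝ) : Set (ℝ × Pth d) := {p | t ≤ p.1 ∧ p.2 ∈ C0 d}

def stdBasis (d : ℕ) (i : Fin d) : Eucl d := EuclideanSpace.single i 1

/-- Horizontal (Dupire) derivative. -/
def HasHorizDerivAt {d : ℕ} (f : ℝ × Pth d → ℝ) (p : ℝ × Pth d) (v : ℝ) : Prop :=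
  Tendsto (fun h : ℝ => (f (p.1 + h, shift p.2 h) - f p) / h) (𝓝[>] (0:ℝ)) (𝓝 v)

/-- Vertical (Dupire) derivative in direction `e_i`. -/
def HasVertDerivAt {d : ℕ} (f : ℝ × Pth d → ℝ) (p : ℝ × Pth d) (i : Fin d) (v : ℝ) : Prop :=
  Tendsto (fun h : ℝ => (f (p.1, vpert p.2 (h • stdBasis d i)) - f p) / h) (𝓝[≠] (0:ℝ)) (𝓝 v)

/-- Continuity on a set w.r.t. `d_∞`. -/
def DContinuousOn {d : ℕ} {E : Type*} [NormedAddCommGroup E]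
    (f : ℝ × Pth d → E) (S : Set (ℝ × Pth d)) : Prop :=
  ∀ p ∈ S, ∀ ε > (0:ℝ), ∃ δ > (0:ℝ), ∀ q ∈ S, dInfty p q < δ → ‖f q - f p‖ < ε

/-- Uniform continuity on a set w.r.t. `d_∞`. -/
def DUnifContOn {d : ℕ} {E : Type*} [NormedAddCommGroup E]
    (f : ℝ × Pth d → E) (S : Set (ℝ × Pth d)) : Prop :=
  ∀ ε > (0:ℝ), ∃ δ > (0:ℝ), ∀ p ∈ S, ∀ q ∈ S, dInfty p q < δ → ‖f q - f p‖ < ε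

def BoundedOn {d : ℕ} {E : Type*} [NormedAddCommGroup E]
    (f : ℝ × Pth d → E) (S : Set (ℝ × Pth d)) : Prop :=
  ∃ M : ℝ, ∀ p ∈ S, ‖f p‖ ≤ M

def PolyGrowthOn {d : ℕ} {E : Type*} [NormedAddCommGroup E]
    (f : ℝ × Pth d → E) (S : Set (ℝ × Pth d)) : Prop :=
  ∃ C : ℝ, ∃ k : ℕ, ∀ p ∈ S, ‖f p‖ ≤ C * (1 + |p.1| + normC p.2) ^ k

/-- `f ∈ C_p^{1,2}(Λ̂^t)`, with prescribed pathwise derivatives. -/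
structure IsCp12Hat (d : ℕ) (t : ℝ) (f : ℝ × Pth d → ℝ) (ft : ℝ × Pth d → ℝ)
    (fx : ℝ × Pth d → Eucl d) (fxx : ℝ × Pth d → Matrix (Fin d) (Fin d) ℝ) : Prop where
  horiz : ∀ p ∈ LamHat d t, HasHorizDerivAt f p (ft p)
  vert : ∀ p ∈ LamHat d t, ∀ i, HasVertDerivAt f p i (fx p i)
  vert2 : ∀ p ∈ LamHat d t, ∀ i j, HasVertDerivAt (fun q => fx q j) p i (fxx p i j)
  cont : DContinuousOn f (LamHat d t)
  cont_t : DContinuousOn ft (LamHat d t)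
  cont_x : DContinuousOn fx (LamHat d t)
  cont_xx : ∀ i j, DContinuousOn (fun p => fxx p i j) (LamHat d t)
  growth : PolyGrowthOn f (LamHat d t)
  growth_t : PolyGrowthOn ft (LamHat d t)
  growth_x : PolyGrowthOn fx (LamHat d t)
  growth_xx : ∀ i j, PolyGrowthOn (fun p => fxx p i j) (LamHat d t)

/-- Hilbert–Schmidt norm of a matrix. -/
def hsNorm {m n : ℕ} (A : Matrix (Fin m) (Fin n) ℝ) : ℝ :=
  Real.sqrt (∑ i, ∑ j, (A i j) ^ 2)

/-- The Hamiltonian `H`. -/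
def Ham {d n : ℕ} {U : Type*} (b : Pth d → U → Eucl d)
    (σ' : Pth d → U → Matrix (Fin d) (Fin n) ℝ) (q : Pth d → U → ℝ)
    (x : Pth d) (p : Eucl d) (l : Matrix (Fin d) (Fin d) ℝ) : ℝ :=
  ⨅ u : U, ((inner ℝ p (b x u) : ℝ) + (1/2) * (l * (σ' x u * (σ' x u)ᵀ)).trace + q x u)

/-- Hypothesis 4.2. -/
structure Hyp42 {d n : ℕ} {U : Type*} [PseudoMetricSpace U] (L : ℝ)
    (b : Pth d → U → Eucl d) (σ' : Pth d → U → Matrix (Fin d) (Fin n) ℝ)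
    (q : Pth d → U → ℝ) : Prop where
  pos : 0 < L
  continuous : ∀ x ∈ C0 d, ∀ u : U, ∀ ε > (0:ℝ), ∃ δ > (0:ℝ), ∀ y ∈ C0 d, ∀ u' : U,
    normC (x - y) < δ → dist u u' < δ →
    ‖b x u - b y u'‖ < ε ∧ hsNorm (σ' x u - σ' y u') < ε ∧ |q x u - q y u'| < ε
  bound_b : ∀ x ∈ C0 d, ∀ u : U, ‖b x u‖ ^ 2 ≤ L ^ 2 * (1 + normC x ^ 2)
  bound_σ : ∀ x ∈ C0 d, ∀ u : U, hsNorm (σ' x u) ^ 2 ≤ L ^ 2 * (1 + normC x ^ 2)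
  bound_q : ∀ x ∈ C0 d, ∀ u : U, (q x u) ^ 2 ≤ L ^ 2 * (1 + normC x ^ 2)
  lip_b : ∀ x ∈ C0 d, ∀ y ∈ C0 d, ∀ u : U, ‖b x u - b y u‖ ≤ L * normC (x - y)
  lip_σ : ∀ x ∈ C0 d, ∀ y ∈ C0 d, ∀ u : U, hsNorm (σ' x u - σ' y u) ≤ L * normC (x - y)
  lip_q : ∀ x ∈ C0 d, ∀ y ∈ C0 d, ∀ u : U, |q x u - q y u| ≤ L * normC (x - y)

/-- Viscosity subsolution of `-λ w + ∂_t w + H(x, ∂_x w, ∂_{xx} w) = 0`. -/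
def IsViscSubsol {d n : ℕ} {U : Type*} (lam : ℝ) (b : Pth d → U → Eucl d)
    (σ' : Pth d → U → Matrix (Fin d) (Fin n) ℝ) (q : Pth d → U → ℝ)
    (w : Pth d → ℝ) : Prop :=
  ∀ s : ℝ, 0 ≤ s → ∀ x ∈ C0 d,
    ∀ (φ φt : ℝ × Pth d → ℝ) (φx : ℝ × Pth d → Eucl d)
      (φxx : ℝ × Pth d → Matrix (Fin d) (Fin d) ℝ),
      IsCp12Hat d s φ φt φx φxx →
      w x - φ (s, x) = 0 →
      (∀ p ∈ Lam d s, w p.2 - φ p ≤ 0) →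
      0 ≤ -lam * w x + φt (s, x) + Ham b σ' q x (φx (s, x)) (φxx (s, x))

/-- Viscosity supersolution. -/
def IsViscSupersol {d n : ℕ} {U : Type*} (lam : ℝ) (b : Pth d → U → Eucl d)
    (σ' : Pth d → U → Matrix (Fin d) (Fin n) ℝ) (q : Pth d → U → ℝ)
    (w : Pth d → ℝ) : Prop :=
  ∀ s : ℝ, 0 ≤ s → ∀ x ∈ C0 d,
    ∀ (φ φt : ℝ × Pth d → ℝ) (φx : ℝ × Pth d → Eucl d)
      (φxx : ℝ × Pth d → Matrix (Fin d) (Fin d) ℝ),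
      IsCp12Hat d s φ φt φx φxx →
      w x + φ (s, x) = 0 →
      (∀ p ∈ Lam d s, 0 ≤ w p.2 + φ p) →
      -lam * w x - φt (s, x) + Ham b σ' q x (-φx (s, x)) (-φxx (s, x)) ≤ 0


/-- The two-argument functional `S_m(t,x,s,y)`. -/
def SmP {d : ℕ} (m : ℕ) (p q : ℝ × Pth d) : ℝ :=
  if normC (shift p.2 (max (q.1 - p.1) 0) - shift q.2 (max (p.1 - q.1) 0)) = 0 then 0
  else (normC (shift p.2 (max (q.1 - p.1) 0) - shift q.2 (max (p.1 - q.1) 0)) ^ (2*m)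
        - ‖p.2 zeroPt - q.2 zeroPt‖ ^ (2*m)) ^ 3
       / normC (shift p.2 (max (q.1 - p.1) 0) - shift q.2 (max (p.1 - q.1) 0)) ^ (4*m)

/-- `Υ^{m,M}(t,x,s,y)`. -/
def UpsP {d : ℕ} (m : ℕ) (M : ℝ) (p q : ℝ × Pth d) : ℝ :=
  SmP m p q + M * ‖p.2 zeroPt - q.2 zeroPt‖ ^ (2*m)

/-- `Ῡ^{m,M}(t,x,s,y) = Υ^{m,M}(t,x,s,y) + |s-t|²`. -/
def UpsBarP {d : ℕ} (m : ℕ) (M : ℝ) (p q : ℝ × Pth d) : ℝ :=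
  UpsP m M p q + (q.1 - p.1) ^ 2

/-- The single-path functional `Υ^{m,M}(x)`. -/
def Ups0 {d : ℕ} (m : ℕ) (M : ℝ) (x : Pth d) : ℝ :=
  (if normC x = 0 then 0
   else (normC x ^ (2*m) - ‖x zeroPt‖ ^ (2*m)) ^ 3 / normC x ^ (4*m))
  + M * ‖x zeroPt‖ ^ (2*m)

/-- `w̃^{t̂}` before taking the upper semicontinuous envelope:
the sup of `w(t,ξ)` over `ξ ∈ 𝒞₀` with `ξ(0) = x₀`. -/
def sliceSup {d : ℕ} (w : ℝ × Pth d → ℝ) (t : ℝ) (x0 : Eucl d) : ℝ :=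
  sSup {r : ℝ | ∃ ξ ∈ C0 d, ξ zeroPt = x0 ∧ r = w (t, ξ)}

def tildeW {d : ℕ} (w : ℝ × Pth d → ℝ) (tHat : ℝ) : ℝ × Eucl d → ℝ := fun p =>
  if tHat ≤ p.1 then sliceSup w p.1 p.2
  else sliceSup w tHat p.2 - Real.sqrt (tHat - p.1)

/-- Upper semicontinuous envelope. -/
def uscEnv {d : ℕ} (g : ℝ × Eucl d → ℝ) : ℝ × Eucl d → ℝ := fun p =>
  Filter.limsup g (nhds p)

/-- A local modulus of continuity. -/
structure LocalModulus (ρ : ℝ → ℝ → ℝ) : Prop where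
  cont : Continuous fun p : ℝ × ℝ => ρ p.1 p.2
  nonneg : ∀ t r, 0 ≤ t → 0 ≤ r → 0 ≤ ρ t r
  zero : ∀ r, 0 ≤ r → ρ 0 r = 0
  subadd : ∀ t s r, 0 ≤ t → 0 ≤ s → 0 ≤ r → ρ (t + s) r ≤ ρ t r + ρ s r
  mono : ∀ t r r', 0 ≤ t → 0 ≤ r → r ≤ r' → ρ t r ≤ ρ t r'

/-- Upper semicontinuity on a set w.r.t. `d_∞`. -/
def DUSCOn {d : ℕ} (w : ℝ × Pth d → ℝ) (S : Set (ℝ × Pth d)) : Prop :=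
  ∀ p ∈ S, ∀ ε > (0:ℝ), ∃ δ > (0:ℝ), ∀ q ∈ S, dInfty p q < δ → w q < w p + ε

def BddAboveOn {d : ℕ} (w : ℝ × Pth d → ℝ) (S : Set (ℝ × Pth d)) : Prop :=
  ∃ M : ℝ, ∀ p ∈ S, w p ≤ M

/-- `limsup_{t+|x|_C → ∞} w(t,x)/(t+|x|_C) < 0` on `Λ`. -/
def NegLimsupAtInfty {d : ℕ} (w : ℝ × Pth d → ℝ) : Prop :=
  ∃ c < (0:ℝ), ∃ R : ℝ, ∀ p ∈ Lam d 0, R ≤ p.1 + normC p.2 →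
    w p ≤ c * (p.1 + normC p.2)

/-- `φ ∈ C^{1,2}([0,∞) × ℝ^d)` with prescribed derivatives. -/
structure IsC12Fin (d : ℕ) (φ φt : ℝ × Eucl d → ℝ) (φx : ℝ × Eucl d → Eucl d)
    (φxx : ℝ × Eucl d → Matrix (Fin d) (Fin d) ℝ) : Prop where
  ht : ∀ p : ℝ × Eucl d, HasDerivAt (fun s => φ (s, p.2)) (φt p) p.1
  hx : ∀ p : ℝ × Eucl d, HasGradientAt (fun y => φ (p.1, y)) (φx p) p.2
  hxx : ∀ p : ℝ × Eucl d, ∀ i j,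
    HasDerivAt (fun h : ℝ => φx (p.1, p.2 + h • stdBasis d j) i) (φxx p i j) 0
  cont : Continuous φ
  cont_t : Continuous φt
  cont_x : Continuous φx
  cont_xx : ∀ i j, Continuous fun p => φxx p i j

/-- The class `Φ(t̂, x̂₀, T)` of Definition 6.1. -/
def PhiClass (d : ℕ) (tHat : ℝ) (xHat0 : Eucl d) (T : ℝ) (f : ℝ × Eucl d → ℝ) : Prop :=
  ∃ r > (0:ℝ), ∀ L > (0:ℝ),
    ∀ (φ φt : ℝ × Eucl d → ℝ) (φx : ℝ × Eucl d → Eucl d)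
      (φxx : ℝ × Eucl d → Matrix (Fin d) (Fin d) ℝ),
      IsC12Fin d φ φt φx φxx →
      ∀ t : ℝ, ∀ x0 : Eucl d, 0 < t → t < T →
        (∀ s : ℝ, ∀ y : Eucl d, 0 ≤ s → s ≤ T → f (s, y) - φ (s, y) ≤ f (t, x0) - φ (t, x0)) →
        ∃ C > (0:ℝ),
          (|t - tHat| + ‖x0 - xHat0‖ < r →
           |f (t, x0)| + ‖φx (t, x0)‖ + hsNorm (φxx (t, x0)) ≤ L →
           C ≤ φt (t, x0))

/-- Operator norm of a square matrix, via the associated Euclidean linear map. -/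
def matOpNorm {ι : Type*} [Fintype ι] [DecidableEq ι] (A : Matrix ι ι ℝ) : ℝ :=
  ‖LinearMap.toContinuousLinearMap (Matrix.toEuclideanLin A)‖

/-- The second-derivative matrix of `φ : ℝ^d × ℝ^d → ℝ` at a point, as a
`(2d) × (2d)` matrix indexed by `Fin d ⊕ Fin d`. -/
def hess2 {d : ℕ} (φ : Eucl d × Eucl d → ℝ) (z : Eucl d × Eucl d) :
    Matrix (Fin d ⊕ Fin d) (Fin d ⊕ Fin d) ℝ := fun k l =>
  iteratedFDeriv ℝ 2 φ z
    ![Sum.elim (fun i => ((stdBasis d i, 0) : Eucl d × Eucl d))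
        (fun j => ((0, stdBasis d j) : Eucl d × Eucl d)) k,
      Sum.elim (fun i => ((stdBasis d i, 0) : Eucl d × Eucl d))
        (fun j => ((0, stdBasis d j) : Eucl d × Eucl d)) l]

/-- Hessian matrix of `φ : ℝ^d → ℝ`. -/
def hess1 {d : ℕ} (φ : Eucl d → ℝ) (z : Eucl d) : Matrix (Fin d) (Fin d) ℝ := fun i j =>
  iteratedFDeriv ℝ 2 φ z ![stdBasis d i, stdBasis d j]


/-- The path `x - a_{t-t̂}` appearing in `S_m(t,x,t̂,a)` (for `t ≥ t̂`). -/
def zRel {d : ℕ} (tHat : ℝ) (a : Pth d) (p : ℝ × Pth d) : Pth d :=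
  shift p.2 (max (tHat - p.1) 0) - shift a (max (p.1 - tHat) 0)
/-!
For `t ≥ t̂` the move `(t, x) ↦ (s, x_{s-t})` shifts both paths of every penalty by the same
amount, and a forward shift preserves both the sup norm and the value at `0`. Hence `W₁` aside,
only the time penalties change: `|s - tᵢ|² - |t - tᵢ|² = (s - t)(s + t - 2tᵢ) ∈ [0, 2T(s - t)]`.
Weighted by `ε` and by `2⁻ⁱ` these add up to at most `(2ε + 4)T(s - t)`, and the `W₁` difference
is bounded by the assumed modulus.
-/

lemma shift_zero {d : ℕ} (x : Pth d) : shift x 0 = x := by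
  funext θ
  simp only [shift, neg_zero]
  split_ifs with h
  · rw [show θ = zeroPt from Subtype.ext (le_antisymm θ.2 h)]
  · exact congrArg x (Subtype.ext (add_zero θ.1))

lemma shift_apply_zeroPt {d : ℕ} (x : Pth d) {h : ℝ} (hh : 0 ≤ h) :
    shift x h zeroPt = x zeroPt :=
  dif_pos (by simp [zeroPt, hh])

lemma shift_shift {d : ℕ} (x : Pth d) {a b : ℝ} (ha : 0 ≤ a) :
    shift (shift x a) b = shift x (a + b) := by
  funext θ
  simp only [shift]
  have h0 : (zeroPt : PathDom).1 = 0 := rfl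
  split_ifs <;>
    first
      | rfl
      | (exfalso; push Not at *; linarith)
      | exact congrArg x (Subtype.ext (by ring))

lemma shift_sub {d : ℕ} (x y : Pth d) (h : ℝ) :
    shift (x - y) h = shift x h - shift y h := by
  funext θ
  simp only [shift, Pi.sub_apply]
  split_ifs <;> rfl

/-- A forward shift only repeats the value at `0`, so it does not change the range of `‖x‖`. -/
lemma normC_shift {d : ℕ} (x : Pth d) {h : ℝ} (hh : 0 ≤ h) :
    normC (shift x h) = normC x := by
  suffices Set.range (fun θ => ‖shift x h θ‖) = Set.range (fun θ => ‖x θ‖) from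
    congrArg sSup this
  ext r
  constructor
  · rintro ⟨θ, rfl⟩
    by_cases hθ : -h ≤ θ.1
    · exact ⟨zeroPt, by simp [shift, hθ]⟩
    · push Not at hθ
      exact ⟨⟨θ.1 + h, Set.mem_Iic.mpr (by linarith)⟩, by simp [shift, not_le.mpr hθ]⟩
  · rintro ⟨θ, rfl⟩
    rcases eq_or_lt_of_le (Set.mem_Iic.mp θ.2) with hθ | hθ
    · refine ⟨zeroPt, show ‖shift x h zeroPt‖ = ‖x θ‖ from ?_⟩
      rw [shift_apply_zeroPt x hh, show θ = zeroPt from Subtype.ext hθ]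
    · refine ⟨⟨θ.1 - h, Set.mem_Iic.mpr (by linarith)⟩, ?_⟩
      simp only [shift]
      rw [dif_neg (by simp; linarith)]
      exact congrArg (fun z => ‖z‖) (congrArg x (Subtype.ext (by ring)))

lemma Ups0_shift {d : ℕ} (m : ℕ) (M : ℝ) (x : Pth d) {h : ℝ} (hh : 0 ≤ h) :
    Ups0 m M (shift x h) = Ups0 m M x := by
  rw [Ups0, Ups0, normC_shift x hh, shift_apply_zeroPt x hh]

/-- The path `x_{(s-t)∨0} - y_{(t-s)∨0}` for `p = (t, x)`, `q = (s, y)`, whose sup norm enters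
`S_m(t,x,s,y)`. -/
def alignedDiff {d : ℕ} (p q : ℝ × Pth d) : Pth d :=
  shift p.2 (max (q.1 - p.1) 0) - shift q.2 (max (p.1 - q.1) 0)

lemma SmP_eq_alignedDiff {d : ℕ} (m : ℕ) (p q : ℝ × Pth d) :
    SmP m p q = if normC (alignedDiff p q) = 0 then 0
      else (normC (alignedDiff p q) ^ (2 * m) - ‖p.2 zeroPt - q.2 zeroPt‖ ^ (2 * m)) ^ 3
        / normC (alignedDiff p q) ^ (4 * m) :=
  rfl

lemma alignedDiff_shift_left {d : ℕ} (x : Pth d) (q : ℝ × Pth d) {t s : ℝ}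
    (hqt : q.1 ≤ t) (hts : t ≤ s) :
    alignedDiff (s, shift x (s - t)) q = shift (alignedDiff (t, x) q) (s - t) := by
  simp only [alignedDiff, max_eq_right (sub_nonpos.2 (hqt.trans hts)),
    max_eq_right (sub_nonpos.2 hqt), max_eq_left (sub_nonneg.2 (hqt.trans hts)),
    max_eq_left (sub_nonneg.2 hqt), shift_zero, shift_sub,
    shift_shift q.2 (sub_nonneg.2 hqt)]
  ring_nf

lemma alignedDiff_shift_right {d : ℕ} (p : ℝ × Pth d) (y : Pth d) {t s : ℝ}
    (hpt : p.1 ≤ t) (hts : t ≤ s) :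
    alignedDiff p (s, shift y (s - t)) = shift (alignedDiff p (t, y)) (s - t) := by
  simp only [alignedDiff, max_eq_right (sub_nonpos.2 (hpt.trans hts)),
    max_eq_right (sub_nonpos.2 hpt), max_eq_left (sub_nonneg.2 (hpt.trans hts)),
    max_eq_left (sub_nonneg.2 hpt), shift_zero, shift_sub,
    shift_shift p.2 (sub_nonneg.2 hpt)]
  ring_nf

lemma UpsP_shift_left {d : ℕ} (m : ℕ) (M : ℝ) (x : Pth d) (q : ℝ × Pth d) {t s : ℝ}
    (hqt : q.1 ≤ t) (hts : t ≤ s) :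
    UpsP m M (s, shift x (s - t)) q = UpsP m M (t, x) q := by
  rw [UpsP, UpsP, SmP_eq_alignedDiff, SmP_eq_alignedDiff, alignedDiff_shift_left x q hqt hts,
    normC_shift _ (sub_nonneg.2 hts)]
  simp only [shift_apply_zeroPt x (sub_nonneg.2 hts)]

lemma UpsBarP_shift_right {d : ℕ} (m : ℕ) (M : ℝ) (p : ℝ × Pth d) (y : Pth d) {t s : ℝ}
    (hpt : p.1 ≤ t) (hts : t ≤ s) :
    UpsBarP m M p (s, shift y (s - t))
      = UpsBarP m M p (t, y) + ((s - p.1) ^ 2 - (t - p.1) ^ 2) := by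
  rw [UpsBarP, UpsBarP, UpsP, UpsP, SmP_eq_alignedDiff, SmP_eq_alignedDiff, alignedDiff_shift_right p y hpt hts,
    normC_shift _ (sub_nonneg.2 hts)]
  simp only [shift_apply_zeroPt y (sub_nonneg.2 hts)]
  ring

lemma sub_sq_sub_sub_sq_nonneg {a t s : ℝ} (hat : a ≤ t) (hts : t ≤ s) :
    0 ≤ (s - a) ^ 2 - (t - a) ^ 2 := by
  nlinarith

lemma sub_sq_sub_sub_sq_le {a t s T : ℝ} (ha : 0 ≤ a) (hts : t ≤ s) (hsT : s ≤ T) :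
    (s - a) ^ 2 - (t - a) ^ 2 ≤ 2 * T * (s - t) := by
  nlinarith

/-- If `f` is not summable neither is `f + g`, and both sums are `0` by convention. -/
lemma tsum_add_sub_tsum_le {f g : ℕ → ℝ} (hg : Summable g) (hg0 : 0 ≤ g) :
    ∑' i, (f i + g i) - ∑' i, f i ≤ ∑' i, g i := by
  by_cases hf : Summable f
  · rw [hf.tsum_add hg]
    linarith
  · have hfg : ¬ Summable fun i => f i + g i := fun h => hf (by simpa using h.sub hg)
    rw [tsum_eq_zero_of_not_summable hfg, tsum_eq_zero_of_not_summable hf, sub_zero]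
    exact tsum_nonneg hg0

lemma tsum_geometric_half_add_sub_le {f g : ℕ → ℝ} {c : ℝ} (hg0 : 0 ≤ g)
    (hgc : ∀ i, g i ≤ (1 / 2 : ℝ) ^ i * c) :
    ∑' i, (f i + g i) - ∑' i, f i ≤ 2 * c := by
  have hgeo : Summable fun i : ℕ => (1 / 2 : ℝ) ^ i * c :=
    (summable_geometric_two).mul_right c
  have hg : Summable g := Summable.of_nonneg_of_le hg0 hgc hgeo
  calc ∑' i, (f i + g i) - ∑' i, f i ≤ ∑' i, g i := tsum_add_sub_tsum_le hg hg0
    _ ≤ ∑' i : ℕ, (1 / 2 : ℝ) ^ i * c := hg.tsum_le_tsum hgc hgeo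
    _ = 2 * c := by rw [tsum_mul_right, tsum_geometric_two]

theorem penalized_shift_regularity_general {d : ℕ} (lam Ch : ℝ)
    (W₁ : Pth d → ℝ)
    (hW : ∀ h : ℝ, 0 ≤ h → ∀ x ∈ C0 d,
      |W₁ x - W₁ (shift x h)|
        ≤ Ch * (1 + normC x) * (h + Real.sqrt h + 1 - Real.exp (-lam * h)))
    (ε β tHat : ℝ) (hε : 0 < ε) (htHat : 0 ≤ tHat)
    (xHat ξHat : Pth d)
    (ti : ℕ → ℝ) (xi : ℕ → Pth d)
    (hti : ∀ i, 0 ≤ ti i ∧ ti i ≤ tHat) :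
    ∀ T : ℝ, tHat < T → ∀ t s : ℝ, tHat ≤ t → t ≤ s → s ≤ T → ∀ x ∈ C0 d,
      (W₁ x - 2 ^ 5 * β * UpsP 3 3 (t, x) (tHat, ξHat) - ε * Ups0 1 3 x
          - ε * UpsBarP 3 3 (tHat, xHat) (t, x)
          - ∑' i : ℕ, (1 / 2 : ℝ) ^ i * UpsBarP 3 3 (ti i, xi i) (t, x))
        - (W₁ (shift x (s - t)) - 2 ^ 5 * β * UpsP 3 3 (s, shift x (s - t)) (tHat, ξHat)
            - ε * Ups0 1 3 (shift x (s - t))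
            - ε * UpsBarP 3 3 (tHat, xHat) (s, shift x (s - t))
            - ∑' i : ℕ, (1 / 2 : ℝ) ^ i * UpsBarP 3 3 (ti i, xi i) (s, shift x (s - t)))
        ≤ Ch * (1 + normC x) * ((s - t) + Real.sqrt (s - t) + 1 - Real.exp (-lam * (s - t)))
          + (2 * ε + 4) * T * (s - t) := by
  intro T _ t s htt hts hsT x hx
  have hst : 0 ≤ s - t := sub_nonneg.2 hts
  have hW₁ := (le_abs_self _).trans (hW (s - t) hst x hx)
  have hεterm : ε * ((s - tHat) ^ 2 - (t - tHat) ^ 2) ≤ ε * (2 * T * (s - t)) :=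
    mul_le_mul_of_nonneg_left (sub_sq_sub_sub_sq_le htHat hts hsT) hε.le
  have hseries : ∑' i : ℕ, (1 / 2 : ℝ) ^ i * UpsBarP 3 3 (ti i, xi i) (s, shift x (s - t))
      - ∑' i : ℕ, (1 / 2 : ℝ) ^ i * UpsBarP 3 3 (ti i, xi i) (t, x) ≤ 2 * (2 * T * (s - t)) := by
    have hti_le i : ti i ≤ t := (hti i).2.trans htt
    have hshift i := UpsBarP_shift_right 3 3 (ti i, xi i) x (hti_le i) hts
    simp_rw [hshift, mul_add]
    refine tsum_geometric_half_add_sub_le (fun i => ?_) (fun i => ?_)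
    · exact mul_nonneg (by positivity) (sub_sq_sub_sub_sq_nonneg (hti_le i) hts)
    · exact mul_le_mul_of_nonneg_left (sub_sq_sub_sub_sq_le (hti i).1 hts hsT) (by positivity)
  rw [UpsP_shift_left 3 3 x _ htt hts, Ups0_shift 1 3 x hst,
    UpsBarP_shift_right 3 3 _ x htt hts]
  linarith

/-- Lemma 6.10: shift regularity of the penalized
subsolution `w₁`. -/
theorem penalized_shift_regularity {d : ℕ} (lam Ch : ℝ) (hlam : 0 < lam) (hCh : 0 < Ch)
    (W₁ : Pth d → ℝ)
    (hW : ∀ h : ℝ, 0 ≤ h → ∀ x ∈ C0 d,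
      |W₁ x - W₁ (shift x h)|
        ≤ Ch * (1 + normC x) * (h + Real.sqrt h + 1 - Real.exp (-lam * h)))
    (ε β tHat : ℝ) (hε : 0 < ε) (hβ : 0 < β) (htHat : 0 ≤ tHat)
    (xHat ξHat : Pth d) (hxHat : xHat ∈ C0 d) (hξHat : ξHat ∈ C0 d)
    (ti : ℕ → ℝ) (xi : ℕ → Pth d)
    (hti : ∀ i, 0 ≤ ti i ∧ ti i ≤ tHat) (hxi : ∀ i, xi i ∈ C0 d)
    (K : ℝ) (hK : ∀ i, normC (xi i) ≤ K) :
    ∀ T : ℝ, tHat < T → ∀ t s : ℝ, tHat ≤ t → t ≤ s → s ≤ T → ∀ x ∈ C0 d,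
      (W₁ x - 2 ^ 5 * β * UpsP 3 3 (t, x) (tHat, ξHat) - ε * Ups0 1 3 x
          - ε * UpsBarP 3 3 (tHat, xHat) (t, x)
          - ∑' i : ℕ, (1 / 2 : ℝ) ^ i * UpsBarP 3 3 (ti i, xi i) (t, x))
        - (W₁ (shift x (s - t)) - 2 ^ 5 * β * UpsP 3 3 (s, shift x (s - t)) (tHat, ξHat)
            - ε * Ups0 1 3 (shift x (s - t))
            - ε * UpsBarP 3 3 (tHat, xHat) (s, shift x (s - t))
            - ∑' i : ℕ, (1 / 2 : ℝ) ^ i * UpsBarP 3 3 (ti i, xi i) (s, shift x (s - t)))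
        ≤ Ch * (1 + normC x) * ((s - t) + Real.sqrt (s - t) + 1 - Real.exp (-lam * (s - t)))
          + (2 * ε + 4) * T * (s - t) :=
  penalized_shift_regularity_general lam Ch W₁ hW ε β tHat hε htHat xHat ξHat ti xi hti
end PathHJB
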